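/- The image under the toric moment map of the set of simple unit 2-forms on ℝ⁶ (the Grassmannian orbit parametrizing orthogonal almost product structures) is the solid octahedron: {μ(baᵀ − abᵀ) : a, b ∈ ℝ⁶ orthonormal} = {(x,y,z) ∈ ℝ³ : |x| + |y| + |z| ≤ 1}. -/

import Mathlib

/-!
The `k`-th component of `μ(a ∧ b)` is the `2 × 2` determinant of the projections of `a` and `b`
to the `k`-th coordinate plane, hence at most half the sum of their squared norms; summing over
the three planes bounds `|x| + |y| + |z|` by `(|a|² + |b|²) / 2 = 1`.

Conversely, for `a = (α₁, 0, α₂, 0, α₃, 0)` and `b = (γ₁, β₁, γ₂, β₂, γ₃, β₃)` one gets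
`μ(a ∧ b) = (α₁β₁, α₂β₂, α₃β₃)`. A point `x` of the octahedron factors as `αₖβₖ = xₖ` with `|α| = 1`
and `|β| ≤ 1` by taking `αₖ² = |xₖ| + (1 - Σ|xᵢ|) / 3`, and a vector `γ ⊥ α` in `ℝ³` supplies the
missing norm of `b`.
-/

open Matrix

noncomputable section

/-- The toric moment map `μ(A) = (⟨Ae₁,e₂⟩, ⟨Ae₃,e₄⟩, ⟨Ae₅,e₆⟩)`. -/
def μ (A : Matrix (Fin 6) (Fin 6) ℝ) : ℝ × ℝ × ℝ := (A 1 0, A 3 2, A 5 4)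

lemma abs_mul_sub_mul_le (a₀ a₁ b₀ b₁ : ℝ) :
    |b₁ * a₀ - a₁ * b₀| ≤ (a₀ * a₀ + a₁ * a₁ + b₀ * b₀ + b₁ * b₁) / 2 := by
  rw [abs_le]
  constructor
  · nlinarith [sq_nonneg (a₀ + b₁), sq_nonneg (a₁ - b₀)]
  · nlinarith [sq_nonneg (a₀ - b₁), sq_nonneg (a₁ + b₀)]

lemma sum_abs_moment_le (a b : Fin 6 → ℝ) :
    let p := μ (vecMulVec b a - vecMulVec a b)
    |p.1| + |p.2.1| + |p.2.2| ≤ (a ⬝ᵥ a + b ⬝ᵥ b) / 2 := by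
  simp only [μ, Matrix.sub_apply, vecMulVec_apply, dotProduct, Fin.sum_univ_six]
  linarith [abs_mul_sub_mul_le (a 0) (a 1) (b 0) (b 1), abs_mul_sub_mul_le (a 2) (a 3) (b 2) (b 3),
    abs_mul_sub_mul_le (a 4) (a 5) (b 4) (b 5)]

lemma exists_dotProduct_eq_zero_dotProduct_self_eq {ι : Type*} [Fintype ι] [Nontrivial ι]
    (v : ι → ℝ) {r : ℝ} (hr : 0 ≤ r) : ∃ w, v ⬝ᵥ w = 0 ∧ w ⬝ᵥ w = r := by
  obtain ⟨w, hw, hvw⟩ := exists_ne_zero_dotProduct_eq_zero v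
  have hww : 0 < w ⬝ᵥ w :=
    lt_of_le_of_ne (Finset.sum_nonneg fun i _ => mul_self_nonneg (w i))
      (Ne.symm (dotProduct_self_eq_zero.not.mpr hw))
  refine ⟨√(r / (w ⬝ᵥ w)) • w, by rw [dotProduct_smul, dotProduct_comm v, hvw, smul_zero], ?_⟩
  rw [smul_dotProduct, dotProduct_smul, smul_smul, smul_eq_mul, Real.mul_self_sqrt (by positivity),
    div_mul_cancel₀ r hww.ne']

lemma exists_mul_eq_of_sum_abs_le {ι : Type*} [Fintype ι] [Nonempty ι] (x : ι → ℝ)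
    (hx : ∑ i, |x i| ≤ 1) : ∃ α β : ι → ℝ, α ⬝ᵥ α = 1 ∧ β ⬝ᵥ β ≤ 1 ∧ α * β = x := by
  set δ := (1 - ∑ i, |x i|) / Fintype.card ι
  have hδ : 0 ≤ δ := div_nonneg (by linarith) (Nat.cast_nonneg _)
  have hα : ∀ i, √(|x i| + δ) * √(|x i| + δ) = |x i| + δ := fun i =>
    Real.mul_self_sqrt (by positivity)
  refine ⟨fun i => √(|x i| + δ), fun i => x i / √(|x i| + δ), ?_, ?_, ?_⟩
  · simp only [dotProduct, hα, Finset.sum_add_distrib, Finset.sum_const, Finset.card_univ,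
      nsmul_eq_mul]
    rw [mul_div_cancel₀ _ (Nat.cast_ne_zero.mpr Fintype.card_ne_zero)]
    ring
  · calc _ = ∑ i, x i ^ 2 / (|x i| + δ) := by
          simp only [dotProduct, div_mul_div_comm, hα, sq]
      _ ≤ ∑ i, |x i| := Finset.sum_le_sum fun i _ =>
          div_le_of_le_mul₀ (by positivity) (abs_nonneg _)
            (by nlinarith [sq_abs (x i), abs_nonneg (x i)])
      _ ≤ 1 := hx
  · funext i
    by_cases h : √(|x i| + δ) = 0
    · have : |x i| + δ = 0 := by rw [← hα i, h, mul_zero]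
      simp [abs_eq_zero.mp (by linarith [abs_nonneg (x i)] : |x i| = 0)]
    · exact mul_div_cancel₀ _ h

def interleave (u v : Fin 3 → ℝ) : Fin 6 → ℝ := ![u 0, v 0, u 1, v 1, u 2, v 2]

lemma interleave_dotProduct_interleave (u v u' v' : Fin 3 → ℝ) :
    interleave u v ⬝ᵥ interleave u' v' = u ⬝ᵥ u' + v ⬝ᵥ v' := by
  simp only [dotProduct, interleave, Fin.isValue, Fin.sum_univ_six, cons_val_zero, cons_val_one,
    cons_val, Fin.sum_univ_three]
  ring

lemma moment_interleave_zero (u u' v' : Fin 3 → ℝ) :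
    μ (vecMulVec (interleave u' v') (interleave u 0) - vecMulVec (interleave u 0) (interleave u' v'))
      = (u 0 * v' 0, u 1 * v' 1, u 2 * v' 2) := by
  simp [μ, interleave, mul_comm]

lemma exists_orthonormal_moment_eq (p : ℝ × ℝ × ℝ) (hp : |p.1| + |p.2.1| + |p.2.2| ≤ 1) :
    ∃ a b : Fin 6 → ℝ, a ⬝ᵥ a = 1 ∧ b ⬝ᵥ b = 1 ∧ a ⬝ᵥ b = 0 ∧
      p = μ (vecMulVec b a - vecMulVec a b) := by
  obtain ⟨x, y, z⟩ := p
  obtain ⟨α, β, hα, hβ, hαβ⟩ :=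
    exists_mul_eq_of_sum_abs_le ![x, y, z] (by simpa [Fin.sum_univ_three, add_assoc] using hp)
  obtain ⟨γ, hαγ, hγ⟩ := exists_dotProduct_eq_zero_dotProduct_self_eq α (sub_nonneg.mpr hβ)
  refine ⟨interleave α 0, interleave γ β, ?_, ?_, ?_, ?_⟩
  · simp [interleave_dotProduct_interleave, hα]
  · rw [interleave_dotProduct_interleave, hγ]
    ring
  · simp [interleave_dotProduct_interleave, hαγ]
  · rw [moment_interleave_zero]
    simp [← Pi.mul_apply, hαβ]

/-- The image under the toric moment map of the set of simple unit 2-forms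
`a ∧ b` on `ℝ⁶` (the Grassmannian orbit of almost product structures) is the
solid octahedron `|x| + |y| + |z| ≤ 1`. -/
theorem moment_image_grassmannian :
    {p : ℝ × ℝ × ℝ | ∃ a b : Fin 6 → ℝ,
        a ⬝ᵥ a = 1 ∧ b ⬝ᵥ b = 1 ∧ a ⬝ᵥ b = 0 ∧
        p = μ (vecMulVec b a - vecMulVec a b)} =
    {p : ℝ × ℝ × ℝ | |p.1| + |p.2.1| + |p.2.2| ≤ 1} := by
  ext p
  constructor
  · rintro ⟨a, b, ha, hb, -, rfl⟩
    simpa [ha, hb] using sum_abs_moment_le a b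
  · exact exists_orthonormal_moment_eq p
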